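/- arXiv:2002.03689 — 6 statements merged into one kernel-verified Lean document; each statement's English description precedes it below -/
import Mathlib

section
/- For every f ∈ H_X and g ∈ H_Y, P-almost surely: ⟨f ⊗ g, μ_{P_{XY|Z}} − μ_{P_{X|Z}} ⊗ μ_{P_{Y|Z}}⟩_H = E[⟨f, φ_X(X)⟩·⟨g, φ_Y(Y)⟩ | σ(Z)] − E[⟨f, φ_X(X)⟩ | σ(Z)]·E[⟨g, φ_Y(Y)⟩ | σ(Z)], i.e. it equals the conditional covariance Cov(f(X), g(Y) | Z). Here μ_{P_{XY|Z}} := E[φ_X(X) ⊗ φ_Y(Y) | σ(Z)], μ_{P_{X|Z}} := E[φ_X(X) | σ(Z)] and μ_{P_{Y|Z}} := E[φ_Y(Y) | σ(Z)] are Bochner conditional expectations. (Claim derived from Lemmas 3.2 and 3.3 in Section 3.) -/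
open MeasureTheory
open scoped RealInnerProductSpace

/-!
The functionals `⟪f, ·⟫`, `⟪g, ·⟫` and `⟪f ⊗ g, ·⟫` are continuous linear, so they commute with
conditional expectation, and `⟪f ⊗ g, φ_X(X) ⊗ φ_Y(Y)⟫ = ⟪f, φ_X(X)⟫ ⟪g, φ_Y(Y)⟫`. Square
integrability of the features makes `φ_X(X) ⊗ φ_Y(Y)` integrable, since `‖a ⊗ b‖ = ‖a‖ ‖b‖`.
-/

theorem LinearMap.norm_apply_apply_of_inner_apply_apply {E F G : Type*}
    [NormedAddCommGroup E] [InnerProductSpace ℝ E] [NormedAddCommGroup F] [InnerProductSpace ℝ F]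
    [NormedAddCommGroup G] [InnerProductSpace ℝ G] (B : E →ₗ[ℝ] F →ₗ[ℝ] G)
    (hB : ∀ a a' b b', ⟪B a b, B a' b'⟫ = ⟪a, a'⟫ * ⟪b, b'⟫) (a : E) (b : F) :
    ‖B a b‖ = ‖a‖ * ‖b‖ := by
  refine (sq_eq_sq₀ (norm_nonneg _) (by positivity)).1 ?_
  simpa only [real_inner_self_eq_norm_sq, mul_pow] using hB a a b b

theorem ContinuousLinearMap.integrable_apply_apply_of_memLp_two {Ω : Type*} [MeasurableSpace Ω]
    {P : Measure Ω} {E F G : Type*} [NormedAddCommGroup E] [NormedSpace ℝ E]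
    [NormedAddCommGroup F] [NormedSpace ℝ F] [NormedAddCommGroup G] [NormedSpace ℝ G]
    (B : E →L[ℝ] F →L[ℝ] G) {u : Ω → E} {v : Ω → F} (hu : MemLp u 2 P) (hv : MemLp v 2 P) :
    Integrable (fun ω => B (u ω) (v ω)) P :=
  memLp_one_iff_integrable.1 <| hu.of_bilin (fun a b => B a b) ‖B‖₊ hv
    (B.continuous₂.comp_aestronglyMeasurable (hu.1.prodMk hv.1))
    (Filter.Eventually.of_forall fun _ => mod_cast B.le_opNorm₂ _ _)

theorem inner_apply_condExp_sub_apply_condExp_ae_eq {Ω : Type*} {m mΩ : MeasurableSpace Ω}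
    {P : Measure Ω} [IsFiniteMeasure P] {E F G : Type*}
    [NormedAddCommGroup E] [InnerProductSpace ℝ E] [CompleteSpace E]
    [NormedAddCommGroup F] [InnerProductSpace ℝ F] [CompleteSpace F]
    [NormedAddCommGroup G] [InnerProductSpace ℝ G] [CompleteSpace G]
    (B : E →ₗ[ℝ] F →ₗ[ℝ] G) (hB : ∀ a a' b b', ⟪B a b, B a' b'⟫ = ⟪a, a'⟫ * ⟪b, b'⟫)
    {u : Ω → E} {v : Ω → F} (hu : MemLp u 2 P) (hv : MemLp v 2 P) (a : E) (b : F) :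
    (fun ω => ⟪B a b, P[fun ω' => B (u ω') (v ω')|m] ω - B (P[u|m] ω) (P[v|m] ω)⟫) =ᵐ[P]
      fun ω => P[fun ω' => ⟪a, u ω'⟫ * ⟪b, v ω'⟫|m] ω -
        P[fun ω' => ⟪a, u ω'⟫|m] ω * P[fun ω' => ⟪b, v ω'⟫|m] ω := by
  let Bc : E →L[ℝ] F →L[ℝ] G :=
    B.mkContinuous₂ 1 fun a b => by rw [B.norm_apply_apply_of_inner_apply_apply hB, one_mul]
  have hBuv : Integrable (fun ω => B (u ω) (v ω)) P :=
    Bc.integrable_apply_apply_of_memLp_two hu hv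
  have hinner_B : (fun ω => ⟪B a b, B (u ω) (v ω)⟫) = fun ω => ⟪a, u ω⟫ * ⟪b, v ω⟫ :=
    funext fun ω => hB _ _ _ _
  have hcond_B := (innerSL ℝ (B a b)).comp_condExp_comm (m := m) hBuv
  have hcond_u := (innerSL ℝ a).comp_condExp_comm (m := m) (hu.integrable one_le_two)
  have hcond_v := (innerSL ℝ b).comp_condExp_comm (m := m) (hv.integrable one_le_two)
  filter_upwards [hcond_B, hcond_u, hcond_v] with ω hω_B hω_u hω_v
  simp only [Function.comp_def, innerSL_apply_apply, hinner_B] at hω_B hω_u hω_v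
  rw [inner_sub_right, hB, hω_B, hω_u, hω_v]

theorem conditional_cross_covariance_general
    {Ω : Type*} [mΩ : MeasurableSpace Ω] (P : Measure Ω) [IsProbabilityMeasure P]
    {𝒳 : Type*} [MeasurableSpace 𝒳] {𝒴 : Type*} [MeasurableSpace 𝒴]
    {𝒵 : Type*} [m𝒵 : MeasurableSpace 𝒵]
    (X : Ω → 𝒳) (Y : Ω → 𝒴) (Z : Ω → 𝒵)
    (hX : Measurable X) (hY : Measurable Y)
    {HX : Type*} [NormedAddCommGroup HX] [InnerProductSpace ℝ HX] [CompleteSpace HX]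
    [SecondCountableTopology HX] [MeasurableSpace HX] [BorelSpace HX]
    {HY : Type*} [NormedAddCommGroup HY] [InnerProductSpace ℝ HY] [CompleteSpace HY]
    [SecondCountableTopology HY] [MeasurableSpace HY] [BorelSpace HY]
    {H : Type*} [NormedAddCommGroup H] [InnerProductSpace ℝ H] [CompleteSpace H]
    (tmul : HX →ₗ[ℝ] HY →ₗ[ℝ] H)
    (htmul : ∀ (f f' : HX) (g g' : HY),
      ⟪tmul f g, tmul f' g'⟫ = ⟪f, f'⟫ * ⟪g, g'⟫)
    (φX : 𝒳 → HX) (hφX : Measurable φX) (φY : 𝒴 → HY) (hφY : Measurable φY)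
    (hIntX : Integrable (fun ω => ‖φX (X ω)‖ ^ 2) P)
    (hIntY : Integrable (fun ω => ‖φY (Y ω)‖ ^ 2) P)
    (f : HX) (g : HY) :
    (fun ω => ⟪tmul f g,
        (P[fun ω' => tmul (φX (X ω')) (φY (Y ω')) | MeasurableSpace.comap Z m𝒵]) ω -
          tmul ((P[fun ω' => φX (X ω') | MeasurableSpace.comap Z m𝒵]) ω)
            ((P[fun ω' => φY (Y ω') | MeasurableSpace.comap Z m𝒵]) ω)⟫) =ᵐ[P]
      fun ω =>
        (P[fun ω' => ⟪f, φX (X ω')⟫ * ⟪g, φY (Y ω')⟫ | MeasurableSpace.comap Z m𝒵]) ω -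
          (P[fun ω' => ⟪f, φX (X ω')⟫ | MeasurableSpace.comap Z m𝒵]) ω *
            (P[fun ω' => ⟪g, φY (Y ω')⟫ | MeasurableSpace.comap Z m𝒵]) ω := by
  have hφX_memLp : MemLp (fun ω => φX (X ω)) 2 P :=
    (memLp_two_iff_integrable_sq_norm (hφX.comp hX).aestronglyMeasurable).2 hIntX
  have hφY_memLp : MemLp (fun ω => φY (Y ω)) 2 P :=
    (memLp_two_iff_integrable_sq_norm (hφY.comp hY).aestronglyMeasurable).2 hIntY
  exact inner_apply_condExp_sub_apply_condExp_ae_eq tmul htmul hφX_memLp hφY_memLp f g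

/-- (Section 3, from Lemmas 3.2 and 3.3.) For every `f ∈ H_X` and `g ∈ H_Y`, `P`-a.s.,
`⟨f ⊗ g, μ_{P_{XY|Z}} − μ_{P_{X|Z}} ⊗ μ_{P_{Y|Z}}⟩` equals the conditional covariance
`E[⟨f,φ_X(X)⟩⟨g,φ_Y(Y)⟩ | σ(Z)] − E[⟨f,φ_X(X)⟩ | σ(Z)] · E[⟨g,φ_Y(Y)⟩ | σ(Z)]`. -/
theorem conditional_cross_covariance
    {Ω : Type*} [mΩ : MeasurableSpace Ω] (P : Measure Ω) [IsProbabilityMeasure P]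
    {𝒳 : Type*} [MeasurableSpace 𝒳] {𝒴 : Type*} [MeasurableSpace 𝒴]
    {𝒵 : Type*} [m𝒵 : MeasurableSpace 𝒵]
    (X : Ω → 𝒳) (Y : Ω → 𝒴) (Z : Ω → 𝒵)
    (hX : Measurable X) (hY : Measurable Y) (hZ : Measurable Z)
    {HX : Type*} [NormedAddCommGroup HX] [InnerProductSpace ℝ HX] [CompleteSpace HX]
    [SecondCountableTopology HX] [MeasurableSpace HX] [BorelSpace HX]
    {HY : Type*} [NormedAddCommGroup HY] [InnerProductSpace ℝ HY] [CompleteSpace HY]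
    [SecondCountableTopology HY] [MeasurableSpace HY] [BorelSpace HY]
    {H : Type*} [NormedAddCommGroup H] [InnerProductSpace ℝ H] [CompleteSpace H]
    [SecondCountableTopology H]
    (tmul : HX →ₗ[ℝ] HY →ₗ[ℝ] H)
    (htmul : ∀ (f f' : HX) (g g' : HY),
      ⟪tmul f g, tmul f' g'⟫ = ⟪f, f'⟫ * ⟪g, g'⟫)
    (φX : 𝒳 → HX) (hφX : Measurable φX) (φY : 𝒴 → HY) (hφY : Measurable φY)
    (hIntX : Integrable (fun ω => ‖φX (X ω)‖ ^ 2) P)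
    (hIntY : Integrable (fun ω => ‖φY (Y ω)‖ ^ 2) P)
    (f : HX) (g : HY) :
    (fun ω => ⟪tmul f g,
        (P[fun ω' => tmul (φX (X ω')) (φY (Y ω')) | MeasurableSpace.comap Z m𝒵]) ω -
          tmul ((P[fun ω' => φX (X ω') | MeasurableSpace.comap Z m𝒵]) ω)
            ((P[fun ω' => φY (Y ω') | MeasurableSpace.comap Z m𝒵]) ω)⟫) =ᵐ[P]
      fun ω =>
        (P[fun ω' => ⟪f, φX (X ω')⟫ * ⟪g, φY (Y ω')⟫ | MeasurableSpace.comap Z m𝒵]) ω -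
          (P[fun ω' => ⟪f, φX (X ω')⟫ | MeasurableSpace.comap Z m𝒵]) ω *
            (P[fun ω' => ⟪g, φY (Y ω')⟫ | MeasurableSpace.comap Z m𝒵]) ω :=
  conditional_cross_covariance_general (mΩ := mΩ) P (m𝒵 := m𝒵) X Y Z hX hY tmul htmul φX hφX φY hφY
    hIntX hIntY f g
end

section
/- For every measurable G : 𝒵 → H with ∫_𝒵 ‖G(z)‖² dP_Z(z) < ∞, the original loss is bounded by the surrogate loss: 𝓔_{X|Z}(G) := E[‖F_{P_{X|Z}}(Z) − G(Z)‖²_H] ≤ E[‖φ(X) − G(Z)‖²_H] =: 𝓔̃_{X|Z}(G). (Surrogate loss bound of Section 4, proved via the generalised conditional Jensen inequality.) -/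
/-!
Conditional expectation on `L²` is an orthogonal projection, so it is a contraction:
`E‖E[h | m]‖² ≤ E‖h‖²`. Applied to `h = φ(X) - G(Z)`, whose conditional expectation given `Z`
is `F(Z) - G(Z)` because `G(Z)` is `σ(Z)`-measurable, this is the claimed bound.
-/

open MeasureTheory

namespace MeasureTheory

variable {α : Type*} {m m₀ : MeasurableSpace α} {μ : Measure α}
  {E : Type*} [NormedAddCommGroup E] [InnerProductSpace ℝ E]

theorem L2.integral_norm_sq_eq_norm_sq (h : Lp E 2 μ) : ∫ a, ‖h a‖ ^ 2 ∂μ = ‖h‖ ^ 2 := by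
  rw [← real_inner_self_eq_norm_sq, L2.inner_def]
  exact integral_congr_ae (.of_forall fun a => (real_inner_self_eq_norm_sq _).symm)

variable [CompleteSpace E] [IsFiniteMeasure μ]

theorem integral_norm_condExp_sq_le (hm : m ≤ m₀) {f : α → E} (hf : MemLp f 2 μ) :
    ∫ a, ‖μ[f | m] a‖ ^ 2 ∂μ ≤ ∫ a, ‖f a‖ ^ 2 ∂μ := by
  calc ∫ a, ‖μ[f | m] a‖ ^ 2 ∂μ
      = ‖(condExpL2 E ℝ hm hf.toLp : Lp E 2 μ)‖ ^ 2 := by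
        rw [← L2.integral_norm_sq_eq_norm_sq]
        refine integral_congr_ae ?_
        filter_upwards [hf.condExpL2_ae_eq_condExp (𝕜 := ℝ) hm] with a ha
        rw [ha]
    _ ≤ ‖hf.toLp f‖ ^ 2 := by gcongr; exact norm_condExpL2_le hm _
    _ = ∫ a, ‖f a‖ ^ 2 ∂μ := by
        rw [← L2.integral_norm_sq_eq_norm_sq]
        refine integral_congr_ae ?_
        filter_upwards [hf.coeFn_toLp] with a ha
        rw [ha]

theorem integral_norm_condExp_sub_sq_le (hm : m ≤ m₀) {f g : α → E} (hf : MemLp f 2 μ)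
    (hg : MemLp g 2 μ) (hgm : AEStronglyMeasurable[m] g μ) :
    ∫ a, ‖μ[f | m] a - g a‖ ^ 2 ∂μ ≤ ∫ a, ‖f a - g a‖ ^ 2 ∂μ := by
  have hfi := hf.integrable one_le_two
  have hgi := hg.integrable one_le_two
  have h_sub : μ[f - g | m] =ᵐ[μ] μ[f | m] - g := by
    filter_upwards [condExp_sub hfi hgi m, condExp_of_aestronglyMeasurable' hm hgm hgi]
      with a h₁ h₂
    rw [h₁, Pi.sub_apply, Pi.sub_apply, h₂]
  calc ∫ a, ‖μ[f | m] a - g a‖ ^ 2 ∂μ = ∫ a, ‖μ[f - g | m] a‖ ^ 2 ∂μ :=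
        integral_congr_ae (h_sub.mono fun a ha => congrArg (‖·‖ ^ 2) ha.symm)
    _ ≤ ∫ a, ‖f a - g a‖ ^ 2 ∂μ := integral_norm_condExp_sq_le hm (hf.sub hg)

end MeasureTheory

theorem surrogate_loss_bound_general
    {Ω : Type*} [mΩ : MeasurableSpace Ω] (P : Measure Ω) [IsProbabilityMeasure P]
    {𝒳 : Type*} [MeasurableSpace 𝒳] {𝒵 : Type*} [m𝒵 : MeasurableSpace 𝒵]
    (X : Ω → 𝒳) (Z : Ω → 𝒵) (hX : Measurable X) (hZ : Measurable Z)
    {H : Type*} [NormedAddCommGroup H] [InnerProductSpace ℝ H] [CompleteSpace H]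
    [SecondCountableTopology H] [MeasurableSpace H] [BorelSpace H]
    (φ : 𝒳 → H) (hφ : Measurable φ)
    (hInt : Integrable (fun ω => ‖φ (X ω)‖ ^ 2) P)
    (F : 𝒵 → H)
    (hFver : P[fun ω => φ (X ω) | MeasurableSpace.comap Z m𝒵] =ᵐ[P] F ∘ Z)
    (G : 𝒵 → H) (hG : Measurable G)
    (hGL2 : Integrable (fun z => ‖G z‖ ^ 2) (P.map Z)) :
    ∫ ω, ‖F (Z ω) - G (Z ω)‖ ^ 2 ∂P ≤ ∫ ω, ‖φ (X ω) - G (Z ω)‖ ^ 2 ∂P := by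
  have hφX : MemLp (fun ω => φ (X ω)) 2 P :=
    (memLp_two_iff_integrable_sq_norm (hφ.comp hX).aestronglyMeasurable).mpr hInt
  have hGZ : MemLp (fun ω => G (Z ω)) 2 P :=
    (memLp_two_iff_integrable_sq_norm (hG.comp hZ).aestronglyMeasurable).mpr
      ((integrable_map_measure (hG.norm.pow_const 2).aestronglyMeasurable
        hZ.aemeasurable).mp hGL2)
  have hGZ_σZ : AEStronglyMeasurable[MeasurableSpace.comap Z m𝒵] (fun ω => G (Z ω)) P :=
    (hG.comp (comap_measurable Z)).aestronglyMeasurable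
  calc ∫ ω, ‖F (Z ω) - G (Z ω)‖ ^ 2 ∂P
      = ∫ ω, ‖P[fun ω => φ (X ω) | MeasurableSpace.comap Z m𝒵] ω - G (Z ω)‖ ^ 2 ∂P :=
        integral_congr_ae (hFver.mono fun ω hω => congrArg (‖· - G (Z ω)‖ ^ 2) hω.symm)
    _ ≤ ∫ ω, ‖φ (X ω) - G (Z ω)‖ ^ 2 ∂P :=
        integral_norm_condExp_sub_sq_le hZ.comap_le hφX hGZ hGZ_σZ

/-- (Section 4, surrogate loss bound.) For every measurable `G : 𝒵 → H` with
`∫ ‖G z‖² dP_Z < ∞`, the original loss is bounded by the surrogate loss: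
`E[‖F_{P_{X|Z}}(Z) − G(Z)‖²] ≤ E[‖φ(X) − G(Z)‖²]`. -/
theorem surrogate_loss_bound
    {Ω : Type*} [mΩ : MeasurableSpace Ω] (P : Measure Ω) [IsProbabilityMeasure P]
    {𝒳 : Type*} [MeasurableSpace 𝒳] {𝒵 : Type*} [m𝒵 : MeasurableSpace 𝒵]
    (X : Ω → 𝒳) (Z : Ω → 𝒵) (hX : Measurable X) (hZ : Measurable Z)
    {H : Type*} [NormedAddCommGroup H] [InnerProductSpace ℝ H] [CompleteSpace H]
    [SecondCountableTopology H] [MeasurableSpace H] [BorelSpace H]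
    (φ : 𝒳 → H) (hφ : Measurable φ)
    (hInt : Integrable (fun ω => ‖φ (X ω)‖ ^ 2) P)
    (F : 𝒵 → H) (hF : Measurable F)
    (hFver : P[fun ω => φ (X ω) | MeasurableSpace.comap Z m𝒵] =ᵐ[P] F ∘ Z)
    (G : 𝒵 → H) (hG : Measurable G)
    (hGL2 : Integrable (fun z => ‖G z‖ ^ 2) (P.map Z)) :
    ∫ ω, ‖F (Z ω) - G (Z ω)‖ ^ 2 ∂P ≤ ∫ ω, ‖φ (X ω) - G (Z ω)‖ ^ 2 ∂P :=
  surrogate_loss_bound_general (mΩ := mΩ) P (m𝒵 := m𝒵) X Z hX hZ φ hφ hInt F hFver G hG hGL2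
end

section
/- Generalised conditional Jensen's inequality: f(E[V | 𝓔]) ≤ E[f(V) | 𝓔] P-almost surely. (Theorem B.2 of the appendix, in the Bochner-integrable Banach-space setting in which the paper applies it; a Banach space is a real Hausdorff locally convex space and Bochner integrability implies Pettis integrability.) -/
open MeasureTheory

theorem generalised_conditional_jensen_general
    {Ω : Type*} {mF : MeasurableSpace Ω} (P : Measure Ω) [IsProbabilityMeasure P]
    (mE : MeasurableSpace Ω) (hmE : mE ≤ mF)
    {B : Type*} [NormedAddCommGroup B] [NormedSpace ℝ B] [CompleteSpace B]
    (V : Ω → B) (hV : Integrable V P)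
    (f : B → ℝ) (hconv : ConvexOn ℝ Set.univ f) (hlsc : LowerSemicontinuous f)
    (hfV : Integrable (fun ω => f (V ω)) P) :
    ∀ᵐ ω ∂P, f ((P[V | mE]) ω) ≤ (P[fun ω' => f (V ω') | mE]) ω :=
  hconv.map_condExp_le_univ hmE hlsc hV hfV

/-- **Generalised conditional Jensen's inequality** (Theorem B.2, Banach-space
setting): `f(E[V | 𝓔]) ≤ E[f(V) | 𝓔]` `P`-almost surely, for `V` a Bochner
`P`-integrable random variable with values in a separable Banach space and
`f` a convex, lower semicontinuous real function with `f ∘ V` integrable. -/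
theorem generalised_conditional_jensen
    {Ω : Type*} {mF : MeasurableSpace Ω} (P : Measure Ω) [IsProbabilityMeasure P]
    (mE : MeasurableSpace Ω) (hmE : mE ≤ mF)
    {B : Type*} [NormedAddCommGroup B] [NormedSpace ℝ B] [CompleteSpace B]
    [SecondCountableTopology B]
    (V : Ω → B) (hV : Integrable V P)
    (f : B → ℝ) (hconv : ConvexOn ℝ Set.univ f) (hlsc : LowerSemicontinuous f)
    (hfV : Integrable (fun ω => f (V ω)) P) :
    ∀ᵐ ω ∂P, f ((P[V | mE]) ω) ≤ (P[fun ω' => f (V ω') | mE]) ω :=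
  generalised_conditional_jensen_general P mE hmE V hV f hconv hlsc hfV
end

section
/- For P_Z-almost every z ∈ 𝒵, the feature map φ is Bochner integrable with respect to the regular conditional distribution P_{X|Z=z} and F_{P_{X|Z}}(z) = ∫_𝒳 φ(x) dP_{X|Z=z}(x); i.e. the factorised conditional mean embedding agrees P_Z-almost everywhere with the kernel mean embedding of the regular conditional distribution. (Claim established in the proof of Theorem 5.2, combining Theorems 2.9 and 4.1.) -/
open MeasureTheory ProbabilityTheory

/-!
Both `κ` and `condDistrib X Z P` disintegrate the joint law of `(Z, X)`, so they agree
`P_Z`-a.e. and it suffices to prove the claim for `condDistrib X Z P`. Integrability of `φ`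
on almost every fibre is Fubini for the disintegration, and `E[φ(X) | Z]` is the fibrewise
integral `∫ φ d(condDistrib X Z P (Z ·))`. Hence `F ∘ Z` and the fibrewise integral composed
with `Z` agree `P`-a.e.; as both functions on `𝒵` are measurable, they agree `P_Z`-a.e.
-/

theorem MeasureTheory.ae_eq_map_iff_comp_ae_eq {α β E : Type*} {_ : MeasurableSpace α}
    [MeasurableSpace β] [TopologicalSpace E] [TopologicalSpace.MetrizableSpace E]
    {μ : Measure α} {f : α → β} {g g' : β → E} (hf : AEMeasurable f μ)
    (hg : StronglyMeasurable g) (hg' : StronglyMeasurable g') :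
    g =ᵐ[μ.map f] g' ↔ g ∘ f =ᵐ[μ] g' ∘ f :=
  ⟨ae_eq_comp hf, (ae_map_iff hf (hg.measurableSet_eq_fun hg')).2⟩

namespace ProbabilityTheory

variable {α β Ω E : Type*} {mα : MeasurableSpace α} {mβ : MeasurableSpace β}
  [MeasurableSpace Ω] [StandardBorelSpace Ω] [Nonempty Ω] [NormedAddCommGroup E]
  {μ : Measure α} [IsFiniteMeasure μ] {X : α → β} {Y : α → Ω} {f : Ω → E}

theorem ae_integrable_condDistrib_of_integrable_comp (hX : AEMeasurable X μ)
    (hY : AEMeasurable Y μ) (hf : StronglyMeasurable f)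
    (hf_int : Integrable (fun a => f (Y a)) μ) :
    ∀ᵐ b ∂μ.map X, Integrable f (condDistrib Y X μ b) := by
  have h_joint : Integrable (fun p : β × Ω => f p.2) (μ.map fun a => (X a, Y a)) :=
    (integrable_map_measure (hf.comp_measurable measurable_snd).aestronglyMeasurable
      (hX.prodMk hY)).2 hf_int
  exact h_joint.condDistrib_ae_map hY

theorem ae_eq_integral_condDistrib_of_condExp_ae_eq [NormedSpace ℝ E] [CompleteSpace E]
    (hX : Measurable X) (hY : AEMeasurable Y μ) (hf : StronglyMeasurable f)
    (hf_int : Integrable (fun a => f (Y a)) μ) {F : β → E} (hF : StronglyMeasurable F)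
    (hFX : μ[fun a => f (Y a) | mβ.comap X] =ᵐ[μ] F ∘ X) :
    F =ᵐ[μ.map X] fun b => ∫ y, f y ∂condDistrib Y X μ b :=
  (ae_eq_map_iff_comp_ae_eq hX.aemeasurable hF hf.integral_kernel).2 <|
    hFX.symm.trans (condExp_ae_eq_integral_condDistrib hX hY hf hf_int)

end ProbabilityTheory

theorem conditional_mean_embedding_eq_embedding_of_regular_conditional_general
    {Ω : Type*} [mΩ : MeasurableSpace Ω] (P : Measure Ω) [IsProbabilityMeasure P]
    {𝒳 : Type*} [MeasurableSpace 𝒳] [StandardBorelSpace 𝒳]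
    {𝒵 : Type*} [m𝒵 : MeasurableSpace 𝒵]
    (X : Ω → 𝒳) (Z : Ω → 𝒵) (hX : Measurable X) (hZ : Measurable Z)
    {H : Type*} [NormedAddCommGroup H] [InnerProductSpace ℝ H] [CompleteSpace H]
    [SecondCountableTopology H] [MeasurableSpace H] [BorelSpace H]
    (φ : 𝒳 → H) (hφ : Measurable φ)
    (hInt : Integrable (fun ω => φ (X ω)) P)
    (κ : Kernel 𝒵 𝒳) [IsMarkovKernel κ]
    (hκ : P.map (fun ω => (Z ω, X ω)) = (P.map Z) ⊗ₘ κ)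
    (F : 𝒵 → H) (hF : Measurable F)
    (hFver : P[fun ω => φ (X ω) | MeasurableSpace.comap Z m𝒵] =ᵐ[P] F ∘ Z) :
    ∀ᵐ z ∂(P.map Z), Integrable φ (κ z) ∧ F z = ∫ x, φ x ∂(κ z) := by
  have : Nonempty 𝒳 := (Measure.nonempty_of_neZero P).map X
  have hκ_ae : ∀ᵐ z ∂(P.map Z), κ z = condDistrib X Z P z :=
    (condDistrib_ae_eq_of_measure_eq_compProd Z hX.aemeasurable hκ).symm
  filter_upwards [hκ_ae,
    ae_integrable_condDistrib_of_integrable_comp hZ.aemeasurable hX.aemeasurable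
      hφ.stronglyMeasurable hInt,
    ae_eq_integral_condDistrib_of_condExp_ae_eq hZ hX.aemeasurable hφ.stronglyMeasurable hInt
      hF.stronglyMeasurable hFver] with z hκz h_int h_eq
  rw [hκz]
  exact ⟨h_int, h_eq⟩

/-- (Claim from the proof of Theorem 5.2.) For `P_Z`-almost every `z`, the feature map
`φ` is Bochner integrable with respect to the regular conditional distribution
`P_{X|Z=z}` and `F_{P_{X|Z}}(z) = ∫ φ(x) dP_{X|Z=z}(x)`: the factorised conditional
mean embedding agrees `P_Z`-a.e. with the kernel mean embedding of the regular
conditional distribution. -/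
theorem conditional_mean_embedding_eq_embedding_of_regular_conditional
    {Ω : Type*} [mΩ : MeasurableSpace Ω] (P : Measure Ω) [IsProbabilityMeasure P]
    {𝒳 : Type*} [MeasurableSpace 𝒳] [StandardBorelSpace 𝒳]
    {𝒵 : Type*} [m𝒵 : MeasurableSpace 𝒵] [StandardBorelSpace 𝒵]
    (X : Ω → 𝒳) (Z : Ω → 𝒵) (hX : Measurable X) (hZ : Measurable Z)
    {H : Type*} [NormedAddCommGroup H] [InnerProductSpace ℝ H] [CompleteSpace H]
    [SecondCountableTopology H] [MeasurableSpace H] [BorelSpace H]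
    (φ : 𝒳 → H) (hφ : Measurable φ)
    (hInt : Integrable (fun ω => φ (X ω)) P)
    (κ : Kernel 𝒵 𝒳) [IsMarkovKernel κ]
    (hκ : P.map (fun ω => (Z ω, X ω)) = (P.map Z) ⊗ₘ κ)
    (F : 𝒵 → H) (hF : Measurable F)
    (hFver : P[fun ω => φ (X ω) | MeasurableSpace.comap Z m𝒵] =ᵐ[P] F ∘ Z) :
    ∀ᵐ z ∂(P.map Z), Integrable φ (κ z) ∧ F z = ∫ x, φ x ∂(κ z) :=
  conditional_mean_embedding_eq_embedding_of_regular_conditional_general (mΩ := mΩ) P (m𝒵 := m𝒵) X Z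
    hX hZ φ hφ hInt κ hκ F hF hFver
end

section
/- Suppose k is characteristic, P_Z and P_{Z'} are mutually absolutely continuous, and regular conditional distributions P_{X|Z=z} and P_{X'|Z'=z} exist. Then the maximum conditional mean discrepancy M(z) := ‖F_{P_{X|Z}}(z) − F_{P_{X'|Z'}}(z)‖_H vanishes for P_Z-almost all z ∈ 𝒵 if and only if, for P_Z-almost all z ∈ 𝒵, P_{X|Z=z}(B) = P_{X'|Z'=z}(B) for all measurable B ⊆ 𝒳. (Theorem 5.2.) -/
open MeasureTheory ProbabilityTheory

/-!
By the disintegration of the joint law, `E[φ(X) | Z] = ∫ φ dP_{X|Z=Z}`, so `F` is `P_Z`-a.e. the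
kernel mean embedding `z ↦ ∫ φ dP_{X|Z=z}`, and likewise `F'` is `P_{Z'}`-a.e., hence (as
`P_Z ≪ P_{Z'}`) `P_Z`-a.e., the kernel mean embedding of `P_{X'|Z'=z}`. The discrepancy thus
vanishes at `z` iff the two conditional distributions have the same mean embedding, which for a
characteristic kernel means they are equal.
-/

section

variable {Ω 𝒳 𝒵 H : Type*} {mΩ : MeasurableSpace Ω} {P : Measure Ω}
  [MeasurableSpace 𝒳] {m𝒵 : MeasurableSpace 𝒵} {X : Ω → 𝒳} {Z : Ω → 𝒵}
  [NormedAddCommGroup H] {φ : 𝒳 → H}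

lemma ae_eq_of_comp_ae_eq [MeasurableSpace H] [BorelSpace H] [SecondCountableTopology H]
    {f g : 𝒵 → H} (hZ : Measurable Z) (hf : Measurable f) (hg : Measurable g)
    (h : f ∘ Z =ᵐ[P] g ∘ Z) : f =ᵐ[P.map Z] g :=
  (ae_map_iff hZ.aemeasurable (measurableSet_eq_fun hf hg)).mpr h

lemma ae_integrable_of_map_eq_compProd [SFinite P] {κ : Kernel 𝒵 𝒳} [IsSFiniteKernel κ]
    (hX : Measurable X) (hZ : Measurable Z) (hφ : StronglyMeasurable φ)
    (hκ : P.map (fun ω => (Z ω, X ω)) = P.map Z ⊗ₘ κ)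
    (hInt : Integrable (fun ω => φ (X ω)) P) :
    ∀ᵐ z ∂P.map Z, Integrable φ (κ z) := by
  have hφsnd : AEStronglyMeasurable (fun p : 𝒵 × 𝒳 => φ p.2) (P.map Z ⊗ₘ κ) :=
    (hφ.comp_measurable measurable_snd).aestronglyMeasurable
  have hJoint : Integrable (fun p : 𝒵 × 𝒳 => φ p.2) (P.map Z ⊗ₘ κ) := by
    rw [← hκ, integrable_map_measure (hκ ▸ hφsnd) (hZ.prodMk hX).aemeasurable]
    exact hInt
  exact ((Measure.integrable_compProd_iff hφsnd).mp hJoint).1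

lemma ae_eq_integral_kernel_of_condExp_ae_eq_comp [NormedSpace ℝ H] [CompleteSpace H]
    [SecondCountableTopology H] [MeasurableSpace H] [BorelSpace H]
    [StandardBorelSpace 𝒳] [Nonempty 𝒳] [IsFiniteMeasure P] {κ : Kernel 𝒵 𝒳} [IsFiniteKernel κ]
    (hX : Measurable X) (hZ : Measurable Z) (hφ : Measurable φ)
    (hκ : P.map (fun ω => (Z ω, X ω)) = P.map Z ⊗ₘ κ)
    (hInt : Integrable (fun ω => φ (X ω)) P) {F : 𝒵 → H} (hF : Measurable F)
    (hFver : P[fun ω => φ (X ω) | m𝒵.comap Z] =ᵐ[P] F ∘ Z) :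
    F =ᵐ[P.map Z] fun z => ∫ x, φ x ∂κ z := by
  have hG : Measurable fun z => ∫ x, φ x ∂condDistrib X Z P z :=
    (hφ.stronglyMeasurable.comp_measurable measurable_snd).integral_kernel_prod_right'.measurable
  have hFG : F =ᵐ[P.map Z] fun z => ∫ x, φ x ∂condDistrib X Z P z :=
    ae_eq_of_comp_ae_eq hZ hF hG <| hFver.symm.trans <|
      condExp_ae_eq_integral_condDistrib hZ hX.aemeasurable hφ.stronglyMeasurable hInt
  filter_upwards [hFG, condDistrib_ae_eq_of_measure_eq_compProd_of_measurable hZ hX hκ]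
    with z hFz hκz
  rw [hFz, hκz]

end

lemma ae_integral_kernel_eq_iff_ae_eq {𝒳 𝒵 H : Type*} [MeasurableSpace 𝒳] [MeasurableSpace 𝒵]
    [NormedAddCommGroup H] [NormedSpace ℝ H] {φ : 𝒳 → H}
    (hchar : ∀ μ ν : Measure 𝒳, IsProbabilityMeasure μ → IsProbabilityMeasure ν →
      Integrable φ μ → Integrable φ ν → (∫ x, φ x ∂μ) = ∫ x, φ x ∂ν → μ = ν)
    {μ : Measure 𝒵} {κ κ' : Kernel 𝒵 𝒳} [IsMarkovKernel κ] [IsMarkovKernel κ']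
    (hint : ∀ᵐ z ∂μ, Integrable φ (κ z)) (hint' : ∀ᵐ z ∂μ, Integrable φ (κ' z)) :
    (∀ᵐ z ∂μ, ∫ x, φ x ∂κ z = ∫ x, φ x ∂κ' z) ↔ ∀ᵐ z ∂μ, κ z = κ' z := by
  refine Filter.eventually_congr ?_
  filter_upwards [hint, hint'] with z hz hz'
  exact ⟨hchar _ _ inferInstance inferInstance hz hz', fun h => h ▸ rfl⟩

theorem mcmd_zero_iff_equal_conditionals_general
    {Ω : Type*} [mΩ : MeasurableSpace Ω] (P : Measure Ω) [IsProbabilityMeasure P]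
    {𝒳 : Type*} [MeasurableSpace 𝒳] [StandardBorelSpace 𝒳]
    {𝒵 : Type*} [m𝒵 : MeasurableSpace 𝒵]
    (X X' : Ω → 𝒳) (Z Z' : Ω → 𝒵)
    (hX : Measurable X) (hX' : Measurable X') (hZ : Measurable Z) (hZ' : Measurable Z')
    {H : Type*} [NormedAddCommGroup H] [InnerProductSpace ℝ H] [CompleteSpace H]
    [SecondCountableTopology H] [MeasurableSpace H] [BorelSpace H]
    (φ : 𝒳 → H) (hφ : Measurable φ)
    (hInt : Integrable (fun ω => φ (X ω)) P)
    (hInt' : Integrable (fun ω => φ (X' ω)) P)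
    (hchar : ∀ μ ν : Measure 𝒳, IsProbabilityMeasure μ → IsProbabilityMeasure ν →
      Integrable φ μ → Integrable φ ν → (∫ x, φ x ∂μ) = ∫ x, φ x ∂ν → μ = ν)
    (hac : P.map Z ≪ P.map Z')
    (κ κ' : Kernel 𝒵 𝒳) [IsMarkovKernel κ] [IsMarkovKernel κ']
    (hκ : P.map (fun ω => (Z ω, X ω)) = (P.map Z) ⊗ₘ κ)
    (hκ' : P.map (fun ω => (Z' ω, X' ω)) = (P.map Z') ⊗ₘ κ')
    (F F' : 𝒵 → H) (hF : Measurable F) (hF' : Measurable F')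
    (hFver : P[fun ω => φ (X ω) | MeasurableSpace.comap Z m𝒵] =ᵐ[P] F ∘ Z)
    (hFver' : P[fun ω => φ (X' ω) | MeasurableSpace.comap Z' m𝒵] =ᵐ[P] F' ∘ Z') :
    (∀ᵐ z ∂(P.map Z), ‖F z - F' z‖ = 0) ↔
      ∀ᵐ z ∂(P.map Z), ∀ B : Set 𝒳, MeasurableSet B → κ z B = κ' z B := by
  have : Nonempty 𝒳 := (nonempty_of_isProbabilityMeasure P).map X
  have hFκ := ae_eq_integral_kernel_of_condExp_ae_eq_comp hX hZ hφ hκ hInt hF hFver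
  have hFκ' := hac.ae_le (ae_eq_integral_kernel_of_condExp_ae_eq_comp hX' hZ' hφ hκ' hInt' hF' hFver')
  have hint := ae_integrable_of_map_eq_compProd hX hZ hφ.stronglyMeasurable hκ hInt
  have hint' := hac.ae_le
    (ae_integrable_of_map_eq_compProd hX' hZ' hφ.stronglyMeasurable hκ' hInt')
  calc (∀ᵐ z ∂P.map Z, ‖F z - F' z‖ = 0)
      ↔ ∀ᵐ z ∂P.map Z, ∫ x, φ x ∂κ z = ∫ x, φ x ∂κ' z := by
        refine Filter.eventually_congr ?_
        filter_upwards [hFκ, hFκ'] with z hz hz'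
        rw [norm_sub_eq_zero_iff, hz, hz']
    _ ↔ ∀ᵐ z ∂P.map Z, κ z = κ' z := ae_integral_kernel_eq_iff_ae_eq hchar hint hint'
    _ ↔ _ := by simp only [Measure.ext_iff]

/-- **Theorem 5.2.** Suppose the kernel (feature map `φ`) is characteristic, `P_Z` and
`P_{Z'}` are mutually absolutely continuous, and `κ, κ'` are regular conditional
distributions of `X` given `Z` and of `X'` given `Z'`. Then the maximum conditional
mean discrepancy `M(z) := ‖F_{P_{X|Z}}(z) − F_{P_{X'|Z'}}(z)‖` vanishes for
`P_Z`-almost all `z` if and only if, for `P_Z`-almost all `z`,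
`P_{X|Z=z}(B) = P_{X'|Z'=z}(B)` for all measurable `B`. -/
theorem mcmd_zero_iff_equal_conditionals
    {Ω : Type*} [mΩ : MeasurableSpace Ω] (P : Measure Ω) [IsProbabilityMeasure P]
    {𝒳 : Type*} [MeasurableSpace 𝒳] [StandardBorelSpace 𝒳]
    {𝒵 : Type*} [m𝒵 : MeasurableSpace 𝒵] [StandardBorelSpace 𝒵]
    (X X' : Ω → 𝒳) (Z Z' : Ω → 𝒵)
    (hX : Measurable X) (hX' : Measurable X') (hZ : Measurable Z) (hZ' : Measurable Z')
    {H : Type*} [NormedAddCommGroup H] [InnerProductSpace ℝ H] [CompleteSpace H]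
    [SecondCountableTopology H] [MeasurableSpace H] [BorelSpace H]
    (φ : 𝒳 → H) (hφ : Measurable φ)
    (hInt : Integrable (fun ω => φ (X ω)) P)
    (hInt' : Integrable (fun ω => φ (X' ω)) P)
    (hchar : ∀ μ ν : Measure 𝒳, IsProbabilityMeasure μ → IsProbabilityMeasure ν →
      Integrable φ μ → Integrable φ ν → (∫ x, φ x ∂μ) = ∫ x, φ x ∂ν → μ = ν)
    (hac : P.map Z ≪ P.map Z') (hac' : P.map Z' ≪ P.map Z)
    (κ κ' : Kernel 𝒵 𝒳) [IsMarkovKernel κ] [IsMarkovKernel κ']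
    (hκ : P.map (fun ω => (Z ω, X ω)) = (P.map Z) ⊗ₘ κ)
    (hκ' : P.map (fun ω => (Z' ω, X' ω)) = (P.map Z') ⊗ₘ κ')
    (F F' : 𝒵 → H) (hF : Measurable F) (hF' : Measurable F')
    (hFver : P[fun ω => φ (X ω) | MeasurableSpace.comap Z m𝒵] =ᵐ[P] F ∘ Z)
    (hFver' : P[fun ω => φ (X' ω) | MeasurableSpace.comap Z' m𝒵] =ᵐ[P] F' ∘ Z') :
    (∀ᵐ z ∂(P.map Z), ‖F z - F' z‖ = 0) ↔
      ∀ᵐ z ∂(P.map Z), ∀ B : Set 𝒳, MeasurableSet B → κ z B = κ' z B :=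
  mcmd_zero_iff_equal_conditionals_general (mΩ := mΩ) P (m𝒵 := m𝒵) X X' Z Z' hX hX' hZ hZ' φ hφ hInt
    hInt' hchar hac κ κ' hκ hκ' F F' hF hF' hFver hFver'
end

section
/- Suppose the product feature ψ(x,y) := φ_X(x) ⊗ φ_Y(y) is characteristic on 𝒳 × 𝒴. Then the Hilbert–Schmidt conditional independence criterion HSCIC(X, Y | Z) := ‖μ_{P_{XY|Z}} − μ_{P_{X|Z}} ⊗ μ_{P_{Y|Z}}‖_H equals 0 P-almost surely if and only if X and Y are conditionally independent given Z. (Theorem 5.4.) -/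
/-!
Disintegrate `P` along `σ(Z)` by the conditional expectation kernel `κ = condExpKernel P σ(Z)`:
the three conditional mean embeddings are a.e. the Bochner integrals of `ψ`, `φ_X`, `φ_Y` against
`κ ω`, and by Fubini the tensor product of the two marginal embeddings is the embedding of the
product `(κ ω).map X ⊗ (κ ω).map Y`. Hence `HSCIC(ω) = 0` says that the joint law
`(κ ω).map (X, Y)` and the product of its marginals have the same embedding, i.e. (`ψ` being
characteristic) that they are equal, and a.e. equality of these two kernels characterizes
conditional independence. Since every function involved is `σ(Z)`-measurable, the a.e. statements
may be taken with respect to the restriction of `P` to `σ(Z)`, where the kernel characterization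
lives.
-/

open MeasureTheory ProbabilityTheory
open scoped RealInnerProductSpace

lemma LinearMap.norm_apply_apply_of_inner {E F G : Type*}
    [NormedAddCommGroup E] [InnerProductSpace ℝ E] [NormedAddCommGroup F] [InnerProductSpace ℝ F]
    [NormedAddCommGroup G] [InnerProductSpace ℝ G] {B : E →ₗ[ℝ] F →ₗ[ℝ] G}
    (hB : ∀ (f f' : E) (g g' : F), ⟪B f g, B f' g'⟫ = ⟪f, f'⟫ * ⟪g, g'⟫) (f : E) (g : F) :
    ‖B f g‖ = ‖f‖ * ‖g‖ := by
  rw [← sq_eq_sq₀ (norm_nonneg _) (by positivity), mul_pow, ← real_inner_self_eq_norm_sq, hB,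
    real_inner_self_eq_norm_sq, real_inner_self_eq_norm_sq]

lemma MeasureTheory.MemLp.integrable_bilin {α E F G : Type*} {mα : MeasurableSpace α}
    {μ : Measure α} [NormedAddCommGroup E] [NormedSpace ℝ E]
    [NormedAddCommGroup F] [NormedSpace ℝ F] [NormedAddCommGroup G] [NormedSpace ℝ G]
    (B : E →L[ℝ] F →L[ℝ] G) {f : α → E} {g : α → F} (hf : MemLp f 2 μ) (hg : MemLp g 2 μ) :
    Integrable (fun x ↦ B (f x) (g x)) μ :=
  memLp_one_iff_integrable.1 <| hf.of_bilin (fun u v ↦ B u v) ‖B‖₊ hg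
    (B.continuous₂.comp_aestronglyMeasurable₂ hf.1 hg.1)
    (ae_of_all _ fun x ↦ B.le_opNorm₂ (f x) (g x))

lemma MeasureTheory.Integrable.condExpKernel_ae_trim {Ω F : Type*} {m mΩ : MeasurableSpace Ω}
    [StandardBorelSpace Ω] {μ : Measure Ω} [IsFiniteMeasure μ] [NormedAddCommGroup F]
    {f : Ω → F} (hm : m ≤ mΩ) (hf : Integrable f μ) :
    ∀ᵐ ω ∂μ.trim hm, Integrable f (condExpKernel μ m ω) :=
  Measure.ae_integrable_of_integrable_comp (by rwa [condExpKernel_comp_trim hm])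

def IsCharacteristic {α E : Type*} [MeasurableSpace α] [NormedAddCommGroup E] [NormedSpace ℝ E]
    (ψ : α → E) : Prop :=
  ∀ μ ν : Measure α, IsProbabilityMeasure μ → IsProbabilityMeasure ν →
    Integrable ψ μ → Integrable ψ ν → ∫ p, ψ p ∂μ = ∫ p, ψ p ∂ν → μ = ν

section ProductFeature

variable {α β E F G : Type*} [MeasurableSpace α] [MeasurableSpace β]
  [NormedAddCommGroup E] [NormedSpace ℝ E] [CompleteSpace E]
  [NormedAddCommGroup F] [NormedSpace ℝ F] [CompleteSpace F]
  [NormedAddCommGroup G] [NormedSpace ℝ G] [CompleteSpace G]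
  (B : E →L[ℝ] F →L[ℝ] G) {φ : α → E} {γ : β → F}

theorem eq_prod_iff_integral_bilin_eq (hchar : IsCharacteristic fun p : α × β ↦ B (φ p.1) (γ p.2))
    (μ : Measure (α × β)) [IsProbabilityMeasure μ] (hφ : Integrable φ μ.fst)
    (hγ : Integrable γ μ.snd) (hψ : Integrable (fun p ↦ B (φ p.1) (γ p.2)) μ) :
    μ = μ.fst.prod μ.snd ↔
      ∫ p, B (φ p.1) (γ p.2) ∂μ = B (∫ x, φ x ∂μ.fst) (∫ y, γ y ∂μ.snd) := by
  rw [← integral_prod_bilin B hφ hγ]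
  refine ⟨fun h ↦ congrArg (fun ν ↦ ∫ p, B (φ p.1) (γ p.2) ∂ν) h, fun h ↦ ?_⟩
  exact hchar _ _ inferInstance inferInstance hψ
    (hφ.op_fst_snd B.continuous₂ ⟨‖B‖, B.le_opNorm₂⟩ hγ) h

theorem map_prodMk_eq_prod_iff_integral_bilin_eq
    (hchar : IsCharacteristic fun p : α × β ↦ B (φ p.1) (γ p.2))
    (hφm : StronglyMeasurable φ) (hγm : StronglyMeasurable γ)
    {Ω : Type*} [MeasurableSpace Ω] {X : Ω → α} {Y : Ω → β} (hX : Measurable X) (hY : Measurable Y)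
    (ν : Measure Ω) [IsProbabilityMeasure ν] (hφ : Integrable (fun ω ↦ φ (X ω)) ν)
    (hγ : Integrable (fun ω ↦ γ (Y ω)) ν) (hψ : Integrable (fun ω ↦ B (φ (X ω)) (γ (Y ω))) ν) :
    ν.map (fun ω ↦ (X ω, Y ω)) = (ν.map X).prod (ν.map Y) ↔
      ∫ ω, B (φ (X ω)) (γ (Y ω)) ∂ν = B (∫ ω, φ (X ω) ∂ν) (∫ ω, γ (Y ω) ∂ν) := by
  have hXY : Measurable fun ω ↦ (X ω, Y ω) := hX.prodMk hY
  have hψm : StronglyMeasurable fun p : α × β ↦ B (φ p.1) (γ p.2) :=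
    B.continuous₂.comp_stronglyMeasurable
      ((hφm.comp_measurable measurable_fst).prodMk (hγm.comp_measurable measurable_snd))
  have := Measure.isProbabilityMeasure_map (μ := ν) hXY.aemeasurable
  have hjoint := eq_prod_iff_integral_bilin_eq B hchar (ν.map fun ω ↦ (X ω, Y ω))
    (by rwa [Measure.fst_map_prodMk hY,
      integrable_map_measure hφm.aestronglyMeasurable hX.aemeasurable])
    (by rwa [Measure.snd_map_prodMk hX,
      integrable_map_measure hγm.aestronglyMeasurable hY.aemeasurable])
    (by rwa [integrable_map_measure hψm.aestronglyMeasurable hXY.aemeasurable])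
  rwa [Measure.fst_map_prodMk hY, Measure.snd_map_prodMk hX,
    integral_map hXY.aemeasurable hψm.aestronglyMeasurable,
    integral_map hX.aemeasurable hφm.aestronglyMeasurable,
    integral_map hY.aemeasurable hγm.aestronglyMeasurable] at hjoint

end ProductFeature

theorem hscic_zero_iff_condIndep_general
    {Ω : Type*} [mΩ : MeasurableSpace Ω] [StandardBorelSpace Ω]
    (P : Measure Ω) [IsProbabilityMeasure P]
    {𝒳 : Type*} [MeasurableSpace 𝒳] [StandardBorelSpace 𝒳]
    {𝒴 : Type*} [MeasurableSpace 𝒴] [StandardBorelSpace 𝒴]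
    {𝒵 : Type*} [m𝒵 : MeasurableSpace 𝒵]
    (X : Ω → 𝒳) (Y : Ω → 𝒴) (Z : Ω → 𝒵)
    (hX : Measurable X) (hY : Measurable Y) (hZ : Measurable Z)
    {HX : Type*} [NormedAddCommGroup HX] [InnerProductSpace ℝ HX] [CompleteSpace HX]
    [SecondCountableTopology HX] [MeasurableSpace HX] [BorelSpace HX]
    {HY : Type*} [NormedAddCommGroup HY] [InnerProductSpace ℝ HY] [CompleteSpace HY]
    [SecondCountableTopology HY] [MeasurableSpace HY] [BorelSpace HY]
    {H : Type*} [NormedAddCommGroup H] [InnerProductSpace ℝ H] [CompleteSpace H]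
    (tmul : HX →ₗ[ℝ] HY →ₗ[ℝ] H)
    (htmul : ∀ (f f' : HX) (g g' : HY),
      ⟪tmul f g, tmul f' g'⟫ = ⟪f, f'⟫ * ⟪g, g'⟫)
    (φX : 𝒳 → HX) (hφX : Measurable φX) (φY : 𝒴 → HY) (hφY : Measurable φY)
    (hIntX : Integrable (fun ω => ‖φX (X ω)‖ ^ 2) P)
    (hIntY : Integrable (fun ω => ‖φY (Y ω)‖ ^ 2) P)
    (hchar : ∀ μ ν : Measure (𝒳 × 𝒴), IsProbabilityMeasure μ → IsProbabilityMeasure ν →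
      Integrable (fun p => tmul (φX p.1) (φY p.2)) μ →
      Integrable (fun p => tmul (φX p.1) (φY p.2)) ν →
      (∫ p, tmul (φX p.1) (φY p.2) ∂μ) = (∫ p, tmul (φX p.1) (φY p.2) ∂ν) → μ = ν) :
    (fun ω => ‖(P[fun ω' => tmul (φX (X ω')) (φY (Y ω')) | MeasurableSpace.comap Z m𝒵]) ω -
        tmul ((P[fun ω' => φX (X ω') | MeasurableSpace.comap Z m𝒵]) ω)
          ((P[fun ω' => φY (Y ω') | MeasurableSpace.comap Z m𝒵]) ω)‖) =ᵐ[P] 0 ↔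
      CondIndepFun (MeasurableSpace.comap Z m𝒵) (hZ.comap_le) X Y P := by
  have hm : MeasurableSpace.comap Z m𝒵 ≤ mΩ := hZ.comap_le
  let T : HX →L[ℝ] HY →L[ℝ] H := tmul.mkContinuous₂ 1 fun f g ↦ by
    rw [tmul.norm_apply_apply_of_inner htmul, one_mul]
  have hφX2 : MemLp (fun ω ↦ φX (X ω)) 2 P :=
    (memLp_two_iff_integrable_sq_norm (hφX.comp hX).aestronglyMeasurable).2 hIntX
  have hφY2 : MemLp (fun ω ↦ φY (Y ω)) 2 P :=
    (memLp_two_iff_integrable_sq_norm (hφY.comp hY).aestronglyMeasurable).2 hIntY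
  have hφXint := hφX2.integrable one_le_two
  have hφYint := hφY2.integrable one_le_two
  have hψ : Integrable (fun ω ↦ tmul (φX (X ω)) (φY (Y ω))) P := hφX2.integrable_bilin T hφY2
  have hscic : StronglyMeasurable[MeasurableSpace.comap Z m𝒵] fun ω ↦
      ‖P[fun ω' ↦ tmul (φX (X ω')) (φY (Y ω')) | MeasurableSpace.comap Z m𝒵] ω -
        tmul (P[fun ω' ↦ φX (X ω') | MeasurableSpace.comap Z m𝒵] ω)
          (P[fun ω' ↦ φY (Y ω') | MeasurableSpace.comap Z m𝒵] ω)‖ :=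
    (stronglyMeasurable_condExp.sub (T.continuous₂.comp_stronglyMeasurable
      (stronglyMeasurable_condExp.prodMk stronglyMeasurable_condExp))).norm
  rw [condIndepFun_iff_map_prod_eq_prod_map_map hX hY,
    ← hscic.ae_eq_trim_iff hm stronglyMeasurable_zero]
  refine Filter.eventually_congr ?_
  filter_upwards [condExp_ae_eq_trim_integral_condExpKernel hm hψ,
    condExp_ae_eq_trim_integral_condExpKernel hm hφXint,
    condExp_ae_eq_trim_integral_condExpKernel hm hφYint, hψ.condExpKernel_ae_trim hm,
    hφXint.condExpKernel_ae_trim hm, hφYint.condExpKernel_ae_trim hm]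
    with ω hψω hφXω hφYω hψi hφXi hφYi
  rw [Kernel.map_apply _ (hX.prodMk hY), Kernel.prod_apply, Kernel.map_apply _ hX,
    Kernel.map_apply _ hY, map_prodMk_eq_prod_iff_integral_bilin_eq T hchar
      hφX.stronglyMeasurable hφY.stronglyMeasurable hX hY _ hφXi hφYi hψi,
    Pi.zero_apply, norm_eq_zero, sub_eq_zero, hψω, hφXω, hφYω]
  exact Iff.rfl -- `T` unfolds to `tmul`

/-- **Theorem 5.4.** Suppose the product feature `ψ(x,y) := φ_X(x) ⊗ φ_Y(y)` is
characteristic on `𝒳 × 𝒴`. Then the Hilbert–Schmidt conditional independence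
criterion `HSCIC(X,Y|Z) := ‖μ_{P_{XY|Z}} − μ_{P_{X|Z}} ⊗ μ_{P_{Y|Z}}‖` vanishes
`P`-almost surely if and only if `X` and `Y` are conditionally independent
given `Z`. -/
theorem hscic_zero_iff_condIndep
    {Ω : Type*} [mΩ : MeasurableSpace Ω] [StandardBorelSpace Ω] [Nonempty Ω]
    (P : Measure Ω) [IsProbabilityMeasure P]
    {𝒳 : Type*} [MeasurableSpace 𝒳] [StandardBorelSpace 𝒳]
    {𝒴 : Type*} [MeasurableSpace 𝒴] [StandardBorelSpace 𝒴]
    {𝒵 : Type*} [m𝒵 : MeasurableSpace 𝒵] [StandardBorelSpace 𝒵]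
    (X : Ω → 𝒳) (Y : Ω → 𝒴) (Z : Ω → 𝒵)
    (hX : Measurable X) (hY : Measurable Y) (hZ : Measurable Z)
    {HX : Type*} [NormedAddCommGroup HX] [InnerProductSpace ℝ HX] [CompleteSpace HX]
    [SecondCountableTopology HX] [MeasurableSpace HX] [BorelSpace HX]
    {HY : Type*} [NormedAddCommGroup HY] [InnerProductSpace ℝ HY] [CompleteSpace HY]
    [SecondCountableTopology HY] [MeasurableSpace HY] [BorelSpace HY]
    {H : Type*} [NormedAddCommGroup H] [InnerProductSpace ℝ H] [CompleteSpace H]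
    [SecondCountableTopology H]
    (tmul : HX →ₗ[ℝ] HY →ₗ[ℝ] H)
    (htmul : ∀ (f f' : HX) (g g' : HY),
      ⟪tmul f g, tmul f' g'⟫ = ⟪f, f'⟫ * ⟪g, g'⟫)
    (φX : 𝒳 → HX) (hφX : Measurable φX) (φY : 𝒴 → HY) (hφY : Measurable φY)
    (hIntX : Integrable (fun ω => ‖φX (X ω)‖ ^ 2) P)
    (hIntY : Integrable (fun ω => ‖φY (Y ω)‖ ^ 2) P)
    (hchar : ∀ μ ν : Measure (𝒳 × 𝒴), IsProbabilityMeasure μ → IsProbabilityMeasure ν →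
      Integrable (fun p => tmul (φX p.1) (φY p.2)) μ →
      Integrable (fun p => tmul (φX p.1) (φY p.2)) ν →
      (∫ p, tmul (φX p.1) (φY p.2) ∂μ) = (∫ p, tmul (φX p.1) (φY p.2) ∂ν) → μ = ν) :
    (fun ω => ‖(P[fun ω' => tmul (φX (X ω')) (φY (Y ω')) | MeasurableSpace.comap Z m𝒵]) ω -
        tmul ((P[fun ω' => φX (X ω') | MeasurableSpace.comap Z m𝒵]) ω)
          ((P[fun ω' => φY (Y ω') | MeasurableSpace.comap Z m𝒵]) ω)‖) =ᵐ[P] 0 ↔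
      CondIndepFun (MeasurableSpace.comap Z m𝒵) (hZ.comap_le) X Y P :=
  hscic_zero_iff_condIndep_general (mΩ := mΩ) P (m𝒵 := m𝒵) X Y Z hX hY hZ tmul htmul φX hφX φY hφY
    hIntX hIntY hchar
end
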